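/- arXiv:1503.08290 — 2 statements merged into one kernel-verified Lean document; each statement's English description precedes it below -/
import Mathlib

section
/- Let Ψ : F → F be a ℂ-algebra homomorphism such that Ψ(x₁) = a₁₁·x₁ + a₂₁·x₂ and Ψ(x₂) = a₁₂·x₁ + a₂₂·x₂ for complex numbers a₁₁, a₁₂, a₂₁, a₂₂. Then a₁₁·a₂₁·(a₁₁ − a₂₁) = 0 and a₁₂·a₂₂·(a₁₂ − a₂₂) = 0. -/
noncomputable section

open MvPolynomial

/-- The relations ideal for the cohomology of the flag manifold `SU(3)/T`. -/
def Frel : Ideal (MvPolynomial (Fin 2) ℂ) :=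
  Ideal.span {X 0 ^ 2 + X 1 ^ 2 + X 0 * X 1, X 0 ^ 2 * X 1 + X 0 * X 1 ^ 2}

/-- `F = ℂ[x₁,x₂]/(x₁²+x₂²+x₁x₂, x₁²x₂+x₁x₂²)`. -/
abbrev F := MvPolynomial (Fin 2) ℂ ⧸ Frel

def x₁ : F := Ideal.Quotient.mk Frel (X 0)
def x₂ : F := Ideal.Quotient.mk Frel (X 1)

/-- The degree-2 part of `F`. -/
def deg2F : Submodule ℂ F := Submodule.span ℂ {x₁, x₂}

/-- The relations ideal for `H_u = F[y]/(y² + u·y)`. -/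
def Hrel (u : F) : Ideal (Polynomial F) :=
  Ideal.span {Polynomial.X ^ 2 + Polynomial.C u * Polynomial.X}

instance (u : F) : (Hrel u).IsTwoSided := ⟨fun b ha ↦ mul_comm b _ ▸ (Hrel u).smul_mem _ ha⟩

/-- `H_u = F[y]/(y² + u·y)`. -/
abbrev H (u : F) := Polynomial F ⧸ Hrel u

/-- The class `y` in `H_u`. -/
def yH (u : F) : H u := Ideal.Quotient.mk (Hrel u) Polynomial.X

/-- The canonical map `F → H_u`, as a `ℂ`-algebra homomorphism. -/
def ιH (u : F) : F →ₐ[ℂ] H u :=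
  (Ideal.Quotient.mkₐ ℂ (Hrel u)).comp (IsScalarTower.toAlgHom ℂ F (Polynomial F))

/-- The degree-2 part of `H_u`. -/
def deg2H (u : F) : Submodule ℂ (H u) :=
  Submodule.span ℂ {ιH u x₁, ιH u x₂, yH u}

/-- `ω` acts on degree 2 by the matrix `(a₁₁ a₁₂; a₂₁ a₂₂)`. -/
def actsAs (ω : F ≃ₐ[ℂ] F) (a₁₁ a₁₂ a₂₁ a₂₂ : ℂ) : Prop :=
  ω x₁ = a₁₁ • x₁ + a₂₁ • x₂ ∧ ω x₂ = a₁₂ • x₁ + a₂₂ • x₂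

/-- Membership in the Weyl group `W` (the six listed automorphisms). -/
def InW (ω : F ≃ₐ[ℂ] F) : Prop :=
  actsAs ω 1 0 0 1 ∨ actsAs ω 0 1 1 0 ∨ actsAs ω (-1) 0 (-1) 1 ∨
    actsAs ω 1 (-1) 0 (-1) ∨ actsAs ω 0 (-1) 1 (-1) ∨ actsAs ω (-1) 1 (-1) 0

/-! Since `x₁³ = 0` in `F`, also `Ψ(x₁)³ = 0`. Using the relations, `(a x₁ + b x₂)³` collapses to
`3ab(a - b) · x₁²x₂`, and `x₁²x₂ ≠ 0`: the functional "coefficient of `x₁²x₂` minus coefficient of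
`x₁x₂²`" kills every multiple of both generators of the relation ideal, but not `x₁²x₂`. -/

theorem x₁_sq_add_x₂_sq_add_x₁_mul_x₂ : x₁ ^ 2 + x₂ ^ 2 + x₁ * x₂ = 0 :=
  Ideal.Quotient.eq_zero_iff_mem.mpr (Ideal.subset_span (by simp))

theorem x₁_sq_mul_x₂_add_x₁_mul_x₂_sq : x₁ ^ 2 * x₂ + x₁ * x₂ ^ 2 = 0 :=
  Ideal.Quotient.eq_zero_iff_mem.mpr (Ideal.subset_span (by simp))

theorem x₁_pow_three : x₁ ^ 3 = 0 := by
  linear_combination x₁ * x₁_sq_add_x₂_sq_add_x₁_mul_x₂ - x₁_sq_mul_x₂_add_x₁_mul_x₂_sq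

theorem x₂_pow_three : x₂ ^ 3 = 0 := by
  linear_combination x₂ * x₁_sq_add_x₂_sq_add_x₁_mul_x₂ - x₁_sq_mul_x₂_add_x₁_mul_x₂_sq

open Finsupp in
theorem coeff_eq_of_mem_Frel {p : MvPolynomial (Fin 2) ℂ} (hp : p ∈ Frel) :
    coeff (single 0 2 + single 1 1) p = coeff (single 0 1 + single 1 2) p := by
  obtain ⟨u, v, rfl⟩ := Ideal.mem_span_pair.mp hp
  simp only [mul_add, ← mul_assoc, coeff_add, coeff_mul_X', X_pow_eq_monomial,
    coeff_mul_monomial']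
  simp [Finsupp.le_def, Fin.forall_fin_two, ← single_tsub]
  rw [add_comm]
  congr 2
  ext i
  fin_cases i <;> simp

theorem X_zero_sq_mul_X_one_notMem_Frel : (X 0 ^ 2 * X 1 : MvPolynomial (Fin 2) ℂ) ∉ Frel :=
  fun h ↦ by
    simpa [X_pow_eq_monomial, coeff_mul_X', coeff_monomial, Finsupp.ext_iff, Fin.forall_fin_two]
      using coeff_eq_of_mem_Frel h

theorem x₁_sq_mul_x₂_ne_zero : x₁ ^ 2 * x₂ ≠ 0 := by
  rw [x₁, x₂, ← map_pow, ← map_mul, Ne, Ideal.Quotient.eq_zero_iff_mem]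
  exact X_zero_sq_mul_X_one_notMem_Frel

theorem smul_add_smul_pow_three {R A : Type*} [CommRing R] [CommRing A] [Algebra R A]
    {x y : A} (hx : x ^ 3 = 0) (hy : y ^ 3 = 0) (hxy : x ^ 2 * y + x * y ^ 2 = 0) (a b : R) :
    (a • x + b • y) ^ 3 = (3 * a * b * (a - b)) • (x ^ 2 * y) := by
  simp only [Algebra.smul_def, map_mul, map_sub, map_ofNat]
  linear_combination algebraMap R A a ^ 3 * hx + algebraMap R A b ^ 3 * hy +
    3 * algebraMap R A a * algebraMap R A b ^ 2 * hxy

theorem mul_mul_sub_eq_zero_of_pow_three_eq_zero {a b : ℂ} (h : (a • x₁ + b • x₂) ^ 3 = 0) :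
    a * b * (a - b) = 0 := by
  rw [smul_add_smul_pow_three x₁_pow_three x₂_pow_three x₁_sq_mul_x₂_add_x₁_mul_x₂_sq,
    smul_eq_zero, or_iff_left x₁_sq_mul_x₂_ne_zero] at h
  linear_combination h / 3

/-- If `Ψ : F → F` is a `ℂ`-algebra homomorphism with
`Ψ(x₁) = a₁₁·x₁ + a₂₁·x₂` and `Ψ(x₂) = a₁₂·x₁ + a₂₂·x₂`, then
`a₁₁·a₂₁·(a₁₁ − a₂₁) = 0` and `a₁₂·a₂₂·(a₁₂ − a₂₂) = 0`. -/
theorem stmt3 (Ψ : F →ₐ[ℂ] F) (a₁₁ a₁₂ a₂₁ a₂₂ : ℂ)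
    (h1 : Ψ x₁ = a₁₁ • x₁ + a₂₁ • x₂) (h2 : Ψ x₂ = a₁₂ • x₁ + a₂₂ • x₂) :
    a₁₁ * a₂₁ * (a₁₁ - a₂₁) = 0 ∧ a₁₂ * a₂₂ * (a₁₂ - a₂₂) = 0 := by
  constructor
  · apply mul_mul_sub_eq_zero_of_pow_three_eq_zero
    rw [← h1, ← map_pow, x₁_pow_three, map_zero]
  · apply mul_mul_sub_eq_zero_of_pow_three_eq_zero
    rw [← h2, ← map_pow, x₂_pow_three, map_zero]
end
end

section
/- Let l₁, l₂, l₃ be pairwise distinct integers and a, b complex numbers. If the polynomial (a·x + b·y)⁴ lies in the ideal of ℂ[x,y] generated by x⁴ and (y + l₁·x)·(y + l₂·x)·(y + l₃·x), then b = 0. -/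
/-!
Restrict the identity `p·x⁴ + q·∏ᵢ (y + lᵢx) = (ax + by)⁴` to the line `y = -lᵢx`, parametrised as
`t ↦ (t, -lᵢt)`: the product vanishes there, leaving `p(t, -lᵢt)·t⁴ = (a - lᵢb)⁴·t⁴`, so
`(a - lᵢb)⁴ = p(0, 0)` for every `i`. Hence `‖a - lᵢb‖` takes the same value at three distinct real
`lᵢ`; but `r ↦ ‖a - rb‖²` is a quadratic with leading coefficient `‖b‖²`, so `b = 0`.
-/

open MvPolynomial

section LineRestriction

variable {K : Type*} [CommRing K]

noncomputable def lineRestriction (c : K) : MvPolynomial (Fin 2) K →ₐ[K] Polynomial K :=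
  aeval ![Polynomial.X, -Polynomial.C c * Polynomial.X]

@[simp]
lemma lineRestriction_X_zero (c : K) : lineRestriction c (X 0) = Polynomial.X := by
  simp [lineRestriction]

@[simp]
lemma lineRestriction_X_one (c : K) :
    lineRestriction c (X 1) = -Polynomial.C c * Polynomial.X := by
  simp [lineRestriction]

lemma lineRestriction_X_one_add_smul_X_zero (c : K) :
    lineRestriction c (X 1 + c • X 0) = 0 := by
  simp [Polynomial.smul_eq_C_mul]

lemma constantCoeff_lineRestriction (c : K) (p : MvPolynomial (Fin 2) K) :
    (lineRestriction c p).coeff 0 = constantCoeff p := by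
  rw [Polynomial.coeff_zero_eq_eval_zero, ← Polynomial.coe_aeval_eq_eval, lineRestriction,
    comp_aeval_apply]
  convert aeval_zero (S₁ := K) p using 2
  · ext i
    fin_cases i <;> simp
  · exact (Algebra.algebraMap_self_apply _).symm

lemma pow_sub_mul_eq_constantCoeff {n : ℕ} {a b c : K} {p q f : MvPolynomial (Fin 2) K}
    (hf : lineRestriction c f = 0) (h : p * X 0 ^ n + q * f = (a • X 0 + b • X 1) ^ n) :
    (a - c * b) ^ n = constantCoeff p := by
  have hlinear :
      lineRestriction c (a • X 0 + b • X 1) = Polynomial.C (a - c * b) * Polynomial.X := by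
    simp only [map_add, map_smul, lineRestriction_X_zero, lineRestriction_X_one,
      Polynomial.smul_eq_C_mul, map_sub, map_mul]
    ring
  have hline : lineRestriction c p * Polynomial.X ^ n =
      Polynomial.C ((a - c * b) ^ n) * Polynomial.X ^ n := by
    simpa only [map_add, map_mul, map_pow, hf, mul_zero, add_zero, lineRestriction_X_zero,
      hlinear, mul_pow, map_pow] using congrArg (lineRestriction c) h
  rw [← constantCoeff_lineRestriction c, (Polynomial.isRegular_X_pow n).right hline,
    Polynomial.coeff_C_zero]

end LineRestriction

lemma eq_zero_of_norm_sub_smul_eq {E : Type*} [NormedAddCommGroup E] [InnerProductSpace ℝ E]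
    {a b : E} {r s t : ℝ} (hrs : r ≠ s) (hrt : r ≠ t) (hst : s ≠ t)
    (h₁ : ‖a - r • b‖ = ‖a - s • b‖) (h₂ : ‖a - r • b‖ = ‖a - t • b‖) : b = 0 := by
  have hinner : ∀ u v : ℝ, u ≠ v → ‖a - u • b‖ = ‖a - v • b‖ →
      2 * inner ℝ a b = (u + v) * ‖b‖ ^ 2 := by
    intro u v huv hnorm_eq
    have hsq := congrArg (· ^ 2) hnorm_eq
    simp only [norm_sub_sq_real, inner_smul_right, norm_smul, mul_pow, Real.norm_eq_abs,
      sq_abs] at hsq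
    apply mul_left_cancel₀ (sub_ne_zero.mpr huv)
    linear_combination -hsq
  have hb : (s - t) * ‖b‖ ^ 2 = 0 := by
    linear_combination hinner r t hrt h₂ - hinner r s hrs h₁
  simpa [sub_ne_zero.mpr hst] using hb

/-- Let `l₁, l₂, l₃` be pairwise distinct integers and `a, b` complex
numbers. If `(a·x + b·y)⁴` lies in the ideal of `ℂ[x,y]` generated by `x⁴` and
`(y+l₁·x)(y+l₂·x)(y+l₃·x)`, then `b = 0`. -/
theorem stmt16 (l : Fin 3 → ℤ) (hl : Function.Injective l) (a b : ℂ)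
    (h : (a • X 0 + b • X 1 : MvPolynomial (Fin 2) ℂ) ^ 4 ∈
      Ideal.span {(X 0 : MvPolynomial (Fin 2) ℂ) ^ 4,
        ∏ i : Fin 3, (X 1 + (l i : ℂ) • X 0)}) :
    b = 0 := by
  obtain ⟨p, q, hpq⟩ := Ideal.mem_span_pair.mp h
  have hvalue (i : Fin 3) : (a - (l i : ℂ) * b) ^ 4 = constantCoeff p := by
    refine pow_sub_mul_eq_constantCoeff ?_ hpq
    rw [map_prod]
    exact Finset.prod_eq_zero (Finset.mem_univ i) (lineRestriction_X_one_add_smul_X_zero _)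
  have hnorm (i j : Fin 3) : ‖a - (l i : ℝ) • b‖ = ‖a - (l j : ℝ) • b‖ := by
    rw [← pow_left_inj₀ (norm_nonneg _) (norm_nonneg _) four_ne_zero, ← norm_pow, ← norm_pow]
    simp only [Complex.real_smul, Complex.ofReal_intCast, hvalue]
  have hl' : Function.Injective fun i => (l i : ℝ) := Int.cast_injective.comp hl
  exact eq_zero_of_norm_sub_smul_eq (hl'.ne (by decide)) (hl'.ne (by decide))
    (hl'.ne (by decide) : (l 1 : ℝ) ≠ l 2) (hnorm 0 1) (hnorm 0 2)
end
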